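/- Space KAM scrolling invariant: for every binary string s ∈ {0,1}*, the Space KAM performs the run (y(x x y), e0, (⟨s⟩, ε)·ε) →SpKAM^{m} (I, ε, ε) with m = Θ(|s|), and the closure count of every state along this run is bounded by a constant independent of s; consequently, measuring sizes relative to the code toy ⟨s⟩, the run consumes O(log|s|) space. -/

import Mathlib

set_option autoImplicit false

/-! λ-terms with variable names in ℕ. -/
inductive Term : Type
  | var : ℕ → Term
  | lam : ℕ → Term → Term
  | app : Term → Term → Term
deriving DecidableEq

namespace Term

/-- Free variables. -/
def fv : Term → Finset ℕ
  | var x => {x}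
  | lam x t => fv t \ {x}
  | app t u => fv t ∪ fv u

/-- A term is closed if it has no free variables. -/
def closed (t : Term) : Prop := t.fv = ∅

/-- Substitution of `u` for the free occurrences of `x`; it is capture-avoiding
whenever the substituted term `u` is closed, which is the only case arising in
Closed Call-by-Name. -/
def subst (x : ℕ) (u : Term) : Term → Term
  | var y => if y = x then u else var y
  | lam y t => if y = x then lam y t else lam y (subst x u t)
  | app t r => app (subst x u t) (subst x u r)

/-- In-order (left-to-right) enumeration of the constructors (as subterm occurrences). -/
def inorder : Term → List Term
  | var x => [var x]
  | lam x t => lam x t :: inorder t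
  | app t u => inorder t ++ app t u :: inorder u

/-- Membership in the deterministic λ-calculus `Λdet`: the right subterm of every
application is a variable or an abstraction. -/
def IsDet : Term → Prop
  | var _ => True
  | lam _ t => IsDet t
  | app t u => IsDet t ∧ IsDet u ∧ ((∃ x, u = var x) ∨ ∃ x r, u = lam x r)

end Term

/-- Weak head reduction: `(λx.t) u r1 … rh →wh t{x:=u} r1 … rh`. -/
inductive Whr : Term → Term → Prop
  | beta (x : ℕ) (t u : Term) : Whr (Term.app (Term.lam x t) u) (Term.subst x u t)
  | appL {t t' : Term} (u : Term) : Whr t t' → Whr (Term.app t u) (Term.app t' u)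

def WhNormal (t : Term) : Prop := ∀ u, ¬ Whr t u

/-- `NSteps R n a b`: exactly `n` `R`-steps from `a` to `b`. -/
inductive NSteps {α : Type _} (R : α → α → Prop) : ℕ → α → α → Prop
  | refl (a : α) : NSteps R 0 a a
  | head {a b c : α} {n : ℕ} : R a b → NSteps R n b c → NSteps R (n + 1) a c

/-! Closures and (local) environments. -/
mutual
  inductive Clo : Type
    | mk : Term → Env → Clo
  inductive Env : Type
    | nil : Env
    | cons : ℕ → Clo → Env → Env
end

def Env.lookup : Env → ℕ → Option Clo
  | .nil, _ => none
  | .cons y c e, x => if y = x then some c else Env.lookup e x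

def Env.dom : Env → Finset ℕ
  | .nil => ∅
  | .cons x _ e => insert x (Env.dom e)

/-- Restriction `e|s` of an environment to a set of variables. -/
def Env.restrict : Env → Finset ℕ → Env
  | .nil, _ => .nil
  | .cons x c e, s => if x ∈ s then .cons x c (Env.restrict e s) else Env.restrict e s

mutual
  /-- Decoding of a closure into a λ-term. -/
  def Clo.decode : Clo → Term
    | .mk t e => Env.decode t e
  /-- Decoding: `(t, ε)↓ = t`, `(t, [x←c]·e)↓ = (t{x:=c↓}, e)↓`. -/
  def Env.decode : Term → Env → Term
    | t, .nil => t
    | t, .cons x c e => Env.decode (Term.subst x (Clo.decode c) t) e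
end

mutual
  /-- Hereditary number of closures in a closure (without sharing). -/
  def Clo.count : Clo → ℕ
    | .mk _ e => 1 + Env.count e
  def Env.count : Env → ℕ
    | .nil => 0
    | .cons _ c e => Clo.count c + Env.count e
end

mutual
  /-- A closure `(t,e)` is closed: `fv t ⊆ dom e` and hereditarily so. -/
  def Clo.Closed : Clo → Prop
    | .mk t e => t.fv ⊆ e.dom ∧ Env.ClosedE e
  def Env.ClosedE : Env → Prop
    | .nil => True
    | .cons _ c e => Clo.Closed c ∧ Env.ClosedE e
end

mutual
  /-- Environment domain invariant: `dom e = fv t`, hereditarily. -/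
  def Clo.DomInv : Clo → Prop
    | .mk t e => e.dom = t.fv ∧ Env.DomInvE e
  def Env.DomInvE : Env → Prop
    | .nil => True
    | .cons _ c e => Clo.DomInv c ∧ Env.DomInvE e
end

/-- Size of the left address of (the first occurrence of) `u` in the code `t0`:
the binary length of its index in the in-order enumeration of the constructors of `t0`. -/
def addrSize (t0 u : Term) : ℕ := Nat.size (t0.inorder.idxOf u)

mutual
  /-- Size of a closure, relative to the initial code `t0`. -/
  def Clo.size : Term → Clo → ℕ
    | t0, .mk u e => addrSize t0 u + Env.sizeE t0 e
  /-- Size of an environment, relative to the initial code `t0`. -/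
  def Env.sizeE : Term → Env → ℕ
    | _, .nil => 0
    | t0, .cons x c e => addrSize t0 (Term.var x) + Clo.size t0 c + Env.sizeE t0 e
end

def stackSize (t0 : Term) (S : List Clo) : ℕ := (S.map (Clo.size t0)).sum

/-- States of the (Naive/Space) KAM. -/
structure State where
  tm : Term
  env : Env
  stk : List Clo

/-- Size of a state, relative to the initial code `t0`. -/
def State.size (t0 : Term) (s : State) : ℕ :=
  addrSize t0 s.tm + Env.sizeE t0 s.env + stackSize t0 s.stk

/-- Closure count of a state: total number of closures occurring in it,
hereditarily and without sharing (the active term/environment pair is a closure). -/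
def State.count (s : State) : ℕ :=
  1 + Env.count s.env + (s.stk.map Clo.count).sum

def State.decode (s : State) : Term :=
  s.stk.foldl (fun a c => Term.app a c.decode) (Env.decode s.tm s.env)

def initState (t : Term) : State := ⟨t, .nil, []⟩

/-! The Naive KAM. -/
inductive NK : State → State → Prop
  | sea (t u : Term) (e : Env) (S : List Clo) :
      NK ⟨.app t u, e, S⟩ ⟨t, e, .mk u e :: S⟩
  | beta (x : ℕ) (t : Term) (e : Env) (c : Clo) (S : List Clo) :
      NK ⟨.lam x t, e, c :: S⟩ ⟨t, .cons x c e, S⟩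
  | sub {x : ℕ} {e : Env} {u : Term} {e' : Env} (S : List Clo) :
      Env.lookup e x = some (.mk u e') → NK ⟨.var x, e, S⟩ ⟨u, e', S⟩

def NKFinal (s : State) : Prop := ∀ s', ¬ NK s s'

/-- Naive KAM runs counting the number of β-transitions. -/
inductive NKRun : ℕ → State → State → Prop
  | refl (s : State) : NKRun 0 s s
  | sea {t u : Term} {e : Env} {S : List Clo} {s' : State} {n : ℕ} :
      NKRun n ⟨t, e, .mk u e :: S⟩ s' → NKRun n ⟨.app t u, e, S⟩ s'
  | beta {x : ℕ} {t : Term} {e : Env} {c : Clo} {S : List Clo} {s' : State} {n : ℕ} :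
      NKRun n ⟨t, .cons x c e, S⟩ s' → NKRun (n + 1) ⟨.lam x t, e, c :: S⟩ s'
  | sub {x : ℕ} {e : Env} {u : Term} {e' : Env} {S : List Clo} {s' : State} {n : ℕ} :
      Env.lookup e x = some (.mk u e') → NKRun n ⟨u, e', S⟩ s' → NKRun n ⟨.var x, e, S⟩ s'

/-! The Space KAM. -/
inductive SK : State → State → Prop
  | seav {t : Term} {x : ℕ} {e : Env} {c : Clo} (S : List Clo) :
      Env.lookup e x = some c →
      SK ⟨.app t (.var x), e, S⟩ ⟨t, e.restrict t.fv, c :: S⟩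
  | seanv {t u : Term} {e : Env} (S : List Clo) :
      (∀ x, u ≠ .var x) →
      SK ⟨.app t u, e, S⟩ ⟨t, e.restrict t.fv, .mk u (e.restrict u.fv) :: S⟩
  | betaw {x : ℕ} {t : Term} {e : Env} (c : Clo) (S : List Clo) :
      x ∉ t.fv → SK ⟨.lam x t, e, c :: S⟩ ⟨t, e, S⟩
  | betanw {x : ℕ} {t : Term} {e : Env} (c : Clo) (S : List Clo) :
      x ∈ t.fv → SK ⟨.lam x t, e, c :: S⟩ ⟨t, .cons x c e, S⟩
  | sub {x : ℕ} {e : Env} {u : Term} {e' : Env} (S : List Clo) :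
      Env.lookup e x = some (.mk u e') → SK ⟨.var x, e, S⟩ ⟨u, e', S⟩

def SKFinal (s : State) : Prop := ∀ s', ¬ SK s s'

/-- Space KAM runs counting the number of β-transitions (`→βw` and `→β¬w`). -/
inductive SKRun : ℕ → State → State → Prop
  | refl (s : State) : SKRun 0 s s
  | seav {t : Term} {x : ℕ} {e : Env} {c : Clo} {S : List Clo} {s' : State} {n : ℕ} :
      Env.lookup e x = some c →
      SKRun n ⟨t, e.restrict t.fv, c :: S⟩ s' → SKRun n ⟨.app t (.var x), e, S⟩ s'
  | seanv {t u : Term} {e : Env} {S : List Clo} {s' : State} {n : ℕ} :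
      (∀ x, u ≠ .var x) →
      SKRun n ⟨t, e.restrict t.fv, .mk u (e.restrict u.fv) :: S⟩ s' →
      SKRun n ⟨.app t u, e, S⟩ s'
  | betaw {x : ℕ} {t : Term} {e : Env} {c : Clo} {S : List Clo} {s' : State} {n : ℕ} :
      x ∉ t.fv → SKRun n ⟨t, e, S⟩ s' → SKRun (n + 1) ⟨.lam x t, e, c :: S⟩ s'
  | betanw {x : ℕ} {t : Term} {e : Env} {c : Clo} {S : List Clo} {s' : State} {n : ℕ} :
      x ∈ t.fv → SKRun n ⟨t, .cons x c e, S⟩ s' → SKRun (n + 1) ⟨.lam x t, e, c :: S⟩ s'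
  | sub {x : ℕ} {e : Env} {u : Term} {e' : Env} {S : List Clo} {s' : State} {n : ℕ} :
      Env.lookup e x = some (.mk u e') → SKRun n ⟨u, e', S⟩ s' → SKRun n ⟨.var x, e, S⟩ s'

/-! Concrete combinators. -/

/-- I := λx.x -/
def tmI : Term := .lam 0 (.var 0)
/-- θ := λx.λy.y (x x y)  (variables: x := 0, y := 1) -/
def tmTheta : Term := .lam 0 (.lam 1 (.app (.var 1) (.app (.app (.var 0) (.var 0)) (.var 1))))
/-- fix := θ θ -/
def tmFix : Term := .app tmTheta tmTheta
/-- x x y -/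
def xxy : Term := .app (.app (.var 0) (.var 0)) (.var 1)
/-- toyaux := λf.λz. z f f I  (f := 3, z := 2) -/
def tmToyaux : Term := .lam 3 (.lam 2 (.app (.app (.app (.var 2) (.var 3)) (.var 3)) tmI))
/-- toy := fix toyaux -/
def tmToy : Term := .app tmFix tmToyaux

/-- Scott encoding of binary strings (false = 0, true = 1; x0 := 4, x1 := 5, xε := 6):
`⟨ε⟩ := λx0.λx1.λxε.xε`, `⟨b·r⟩ := λx0.λx1.λxε.xb ⟨r⟩`. -/
def encStr : List Bool → Term
  | [] => .lam 4 (.lam 5 (.lam 6 (.var 6)))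
  | b :: r => .lam 4 (.lam 5 (.lam 6 (.app (.var (if b then 5 else 4)) (encStr r))))

/-- A variable fresh for `t`. -/
def freshVar (t : Term) : ℕ := t.fv.sup id + 1

/-- η-expansion: `η(t) := λx. t x` with `x ∉ fv t`. -/
def Term.eta (t : Term) : Term := .lam (freshVar t) (.app t (.var (freshVar t)))

/-- n-fold η-expansion. -/
def etaN (n : ℕ) (t : Term) : Term := Term.eta^[n] t

/-! Environment families for the Naive KAM scrolling invariant
(variables: x := 0, y := 1, z := 2, f := 3, x0 := 4, x1 := 5, xε := 6). -/

/-- `e0 := [x←(θ,ε)]·[y←(toyaux,ε)]`, `e(i+1) := [x←(x,ei)]·[y←(y,ei)]`. -/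
def eE : ℕ → Env
  | 0 => .cons 0 (.mk tmTheta .nil) (.cons 1 (.mk tmToyaux .nil) .nil)
  | i + 1 => .cons 0 (.mk (.var 0) (eE i)) (.cons 1 (.mk (.var 1) (eE i)) .nil)

/-- `e″0 := ε`, `e″(i+1) := [xε←(I,e′i)]·[x1←(f,e′i)]·[x0←(f,e′i)]·e″i`
(with `e′i` inlined). -/
def eDD (s : List Bool) : ℕ → Env
  | 0 => .nil
  | i + 1 =>
    let ep : Env := .cons 2 (.mk (encStr (s.drop i)) (eDD s i)) (.cons 3 (.mk xxy (eE i)) .nil)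
    .cons 6 (.mk tmI ep) (.cons 5 (.mk (.var 3) ep) (.cons 4 (.mk (.var 3) ep) (eDD s i)))

/-- `e′i := [z←(⟨b(i+1)⋯bn⟩, e″i)]·[f←(x x y, ei)]`. -/
def eP (s : List Bool) (i : ℕ) : Env :=
  .cons 2 (.mk (encStr (s.drop i)) (eDD s i)) (.cons 3 (.mk xxy (eE i)) .nil)

/-! The family `tn` for the abstract-time overhead explosion
(variables `xi := i`). -/

/-- `x0 x1 ⋯ xn`. -/
def varsApp : ℕ → Term
  | 0 => .var 0
  | n + 1 => .app (varsApp n) (.var (n + 1))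

/-- Term component of `Sn`: `x0 x0` for `n = 0`, `x0 ⋯ xn` for `n ≥ 1`. -/
def sTerm : ℕ → Term
  | 0 => .app (.var 0) (.var 0)
  | n + 1 => varsApp (n + 1)

/-- `e0 := [x0←(I,ε)]`, `e(n+1) := [x(n+1)←Sn]·en`. -/
def eN : ℕ → Env
  | 0 => .cons 0 (.mk tmI .nil) .nil
  | n + 1 => .cons (n + 1) (.mk (sTerm n) (eN n)) (eN n)

/-- `Sn := (sTerm n, en)`. -/
def sClo (n : ℕ) : Clo := .mk (sTerm n) (eN n)

/-- `Ci⟨t⟩ := λxi. t (x0 ⋯ xi)` (with `C0⟨t⟩ = λx0. t (x0 x0)`). -/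
def cPlug (i : ℕ) (t : Term) : Term := .lam i (.app t (sTerm i))

/-- `C0⟨C1⟨⋯Cn⟨t⟩⋯⟩⟩`. -/
def nest (n : ℕ) (t : Term) : Term := (List.range (n + 1)).foldr cPlug t

/-- `tn := C0⟨C1⟨⋯Cn⟨λy.I⟩⋯⟩⟩ I`. -/
def tN (n : ℕ) : Term := .app (nest n (.lam 1 tmI)) tmI

/-! Global-copy scrolling terms (s′ := 7, z := 2, x := 0, f := 3). -/

/-- `λf.λs′. s′ f f z` (free variable z). -/
def tScroll : Term :=
  .lam 3 (.lam 7 (.app (.app (.app (.var 7) (.var 3)) (.var 3)) (.var 2)))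

/-- `glCpy := λx.( fix (λf.λs′. s′ f f x) ) x`. -/
def glCpy : Term :=
  .lam 0 (.app (.app tmFix
    (.lam 3 (.lam 7 (.app (.app (.app (.var 7) (.var 3)) (.var 3)) (.var 0)))))
    (.var 0))

/-! The Space LAM. -/

structure LState where
  dump : List (Clo × List Clo)
  tm : Term
  env : Env
  stk : List Clo

inductive LAM : LState → LState → Prop
  | sea {D : List (Clo × List Clo)} {t u : Term} {e : Env} {S : List Clo} :
      LAM ⟨D, .app t u, e, S⟩ ⟨(.mk t (e.restrict t.fv), S) :: D, u, e.restrict u.fv, []⟩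
  | ret {D : List (Clo × List Clo)} {u : Term} {e' : Env} {S : List Clo}
      {x : ℕ} {t : Term} {e : Env} :
      LAM ⟨(.mk u e', S) :: D, .lam x t, e, []⟩ ⟨D, u, e', .mk (.lam x t) e :: S⟩
  | betaw {D : List (Clo × List Clo)} {x : ℕ} {t : Term} {e : Env} {c : Clo} {S : List Clo} :
      x ∉ t.fv → LAM ⟨D, .lam x t, e, c :: S⟩ ⟨D, t, e, S⟩
  | betanw {D : List (Clo × List Clo)} {x : ℕ} {t : Term} {e : Env} {c : Clo} {S : List Clo} :
      x ∈ t.fv → LAM ⟨D, .lam x t, e, c :: S⟩ ⟨D, t, .cons x c e, S⟩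
  | sub {D : List (Clo × List Clo)} {x : ℕ} {e : Env} {u : Term} {e' : Env} {S : List Clo} :
      Env.lookup e x = some (.mk u e') → LAM ⟨D, .var x, e, S⟩ ⟨D, u, e', S⟩

def LFinal (ls : LState) : Prop := ∀ ls', ¬ LAM ls ls'

/-- The Space KAM state `(t,e,S)` seen as the Space LAM state `(ε,t,e,S)`. -/
def embed (s : State) : LState := ⟨[], s.tm, s.env, s.stk⟩

def lInit (t : Term) : LState := ⟨[], t, .nil, []⟩

def LState.size (t0 : Term) (ls : LState) : ℕ :=
  (ls.dump.map (fun p => Clo.size t0 p.1 + stackSize t0 p.2)).sum +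
    addrSize t0 ls.tm + Env.sizeE t0 ls.env + stackSize t0 ls.stk

/-- A LAM-sequence from `a` whose first state with empty dump after `a` is its target. -/
inductive LRunToEmpty : LState → LState → Prop
  | single {a b : LState} : LAM a b → b.dump = [] → LRunToEmpty a b
  | cons {a b c : LState} : LAM a b → b.dump ≠ [] → LRunToEmpty b c → LRunToEmpty a c

/-! Log-sensitive Turing machines. -/

/-- Input-tape alphabet {0, 1, L, R}. -/
inductive ISym : Type | zero | one | lend | rend
deriving DecidableEq

/-- Work-tape alphabet {0, 1, □}. -/
inductive WSym : Type | zero | one | blank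
deriving DecidableEq

/-- Head moves. -/
inductive Move : Type | L | R | N
deriving DecidableEq

/-- A log-sensitive Turing machine: states `Fin n`, initial state, final states
`qtrue = s1` and `qfalse = s0`, and a deterministic transition function reading the
current state and the two scanned symbols, writing on the work tape, moving both
heads, and changing state (`none` = halt). -/
structure TM where
  n : ℕ
  start : Fin n
  qtrue : Fin n
  qfalse : Fin n
  δ : Fin n → ISym → WSym → Option (Fin n × WSym × Move × Move)

/-- A configuration: state, input-head position (on the tape `L i R`), and the
work tape split as (left part, reversed) / scanned symbol / (right part). -/
structure Config (M : TM) where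
  q : Fin M.n
  ipos : ℕ
  wl : List WSym
  wcur : WSym
  wr : List WSym

/-- The symbol of the input tape `L i R` at a given position. -/
def inputAt (i : List Bool) (p : ℕ) : ISym :=
  if p = 0 then .lend
  else if h : p - 1 < i.length then (if i.get ⟨p - 1, h⟩ then .one else .zero)
  else .rend

def moveIpos (p : ℕ) : Move → ℕ
  | .L => p - 1
  | .R => p + 1
  | .N => p

def moveWork (wl : List WSym) (c : WSym) (wr : List WSym) : Move → List WSym × WSym × List WSym
  | .L => match wl with
    | [] => ([], .blank, c :: wr)
    | a :: l => (l, a, c :: wr)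
  | .R => match wr with
    | [] => (c :: wl, .blank, [])
    | a :: r => (c :: wl, a, r)
  | .N => (wl, c, wr)

/-- One transition of the TM `M` on input `i`. -/
def TMStep (M : TM) (i : List Bool) (c c' : Config M) : Prop :=
  ∃ q' w mi mw, M.δ c.q (inputAt i c.ipos) c.wcur = some (q', w, mi, mw) ∧
    c'.q = q' ∧ c'.ipos = moveIpos c.ipos mi ∧
    (c'.wl, c'.wcur, c'.wr) = moveWork c.wl w c.wr mw

def initConfig (M : TM) : Config M := ⟨M.start, 0, [], .blank, []⟩

/-- Number of work-tape cells used by a configuration. -/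
def Config.workSize {M : TM} (c : Config M) : ℕ := c.wl.length + 1 + c.wr.length

def TMFinal (M : TM) (i : List Bool) (c : Config M) : Prop := ∀ c', ¬ TMStep M i c c'

/-- `⟨1⟩ := λx.λy.x` and `⟨0⟩ := λx.λy.y`. -/
def encBool (b : Bool) : Term :=
  if b then .lam 0 (.lam 1 (.var 0)) else .lam 0 (.lam 1 (.var 1))


/-!
The machine scrolls through `⟨s⟩` one character at a time. From `y (x x y)`, with
`y ↦ toyaux`, `x ↦ θ` and `⟨b·r⟩` on the stack, eighteen transitions unfold `fix` once, let
`⟨b·r⟩` select its branch, and come back to `y (x x y)` with the same two closures in the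
environment and `⟨r⟩` on the stack; on `⟨ε⟩` twelve transitions reach `(I, ε, ε)`. Because
the Space KAM restricts environments to free variables and `⟨r⟩` is closed, every state met
has at most nine closures, and as the machine is deterministic and `(I, ε, ε)` is final these
are all the reachable states. A closure costs at most two addresses into `toy ⟨s⟩`, a code of
size `O(|s|)`, so every state has size `O(log |s|)`.
-/

theorem NSteps.trans {α : Type _} {R : α → α → Prop} {m n : ℕ} {a b c : α}
    (hab : NSteps R m a b) (hbc : NSteps R n b c) : NSteps R (m + n) a c := by
  induction hab with
  | refl => simpa using hbc
  | head hstep _ ih => simpa only [Nat.add_right_comm] using NSteps.head hstep (ih hbc)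

theorem NSteps.mono {α : Type _} {R R' : α → α → Prop} (hRR' : ∀ a b, R a b → R' a b)
    {n : ℕ} {a b : α} (h : NSteps R n a b) : NSteps R' n a b := by
  induction h with
  | refl => exact .refl _
  | head hstep _ ih => exact .head (hRR' _ _ hstep) ih

/-- Determinism forces every reduct of `a` onto the run, as the run ends in a normal form. -/
theorem NSteps.of_reflTransGen_of_deterministic {α : Type _} {R : α → α → Prop}
    {P : α → Prop} (hdet : ∀ {a b c}, R a b → R a c → b = c) {n : ℕ} {a b c : α}
    (hrun : NSteps (fun x y => R x y ∧ P y) n a b) (hb : ∀ d, ¬ R b d) (ha : P a)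
    (hac : Relation.ReflTransGen R a c) : P c := by
  induction hrun with
  | refl =>
    rcases hac.cases_head with rfl | ⟨d, had, -⟩
    exacts [ha, absurd had (hb d)]
  | head hstep _ ih =>
    rcases hac.cases_head with rfl | ⟨d, had, hdc⟩
    exacts [ha, ih hb hstep.2 (hdet hstep.1 had ▸ hdc)]

theorem SK.deterministic {a b c : State} (hab : SK a b) (hac : SK a c) : b = c := by
  cases hab <;> cases hac <;> simp_all

theorem SK.not_tmI_nil_nil (s : State) : ¬ SK ⟨tmI, .nil, []⟩ s := by
  rintro ⟨⟩

theorem Env.restrict_empty : ∀ e : Env, e.restrict ∅ = .nil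
  | .nil => rfl
  | .cons _ _ e => by simp [Env.restrict, Env.restrict_empty e]

theorem fv_encStr (s : List Bool) : (encStr s).fv = ∅ := by
  induction s with
  | nil => decide
  | cons b r ih =>
    ext x
    cases b <;> simp [encStr, Term.fv, ih]
    omega

theorem encStr_ne_var (s : List Bool) (x : ℕ) : encStr s ≠ .var x := by
  cases s <;> simp [encStr]

/-- `e0` with its two entries swapped: the environment that the fixpoint `θ θ` rebuilds
for `y (x x y)` after consuming one character. -/
def eE0Swap : Env := .cons 1 (.mk tmToyaux .nil) (.cons 0 (.mk tmTheta .nil) .nil)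

def scrollState (e : Env) (s : List Bool) : State :=
  ⟨.app (.var 1) xxy, e, [.mk (encStr s) .nil]⟩

def SKCountLe (C : ℕ) (a b : State) : Prop := SK a b ∧ b.count ≤ C

theorem scrollState_segments {e : Env} (he : e = eE 0 ∨ e = eE0Swap) :
    NSteps (SKCountLe 9) 12 (scrollState e []) ⟨tmI, .nil, []⟩ ∧
      ∀ b r, NSteps (SKCountLe 9) 18 (scrollState e (b :: r)) (scrollState eE0Swap r) := by
  refine ⟨?_, fun b r => ?_⟩ <;> rcases he with rfl | rfl <;> try cases b
  all_goals
    unfold scrollState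
    -- Run the machine one transition at a time: exactly one rule applies at each state.
    repeat
      apply NSteps.head
      refine ⟨?_, ?_⟩
      first
        | exact SK.seav _ rfl
        | exact SK.sub _ rfl
        | (refine SK.seanv _ fun x => ?_; simp [encStr_ne_var, xxy, tmI])
        | focus refine SK.betanw _ _ ?_; simp [Term.fv, fv_encStr]; done
        | (refine SK.betaw _ _ ?_; simp [Term.fv, fv_encStr])
      -- The closed code `⟨r⟩` is always paired with the empty environment.
      all_goals try simp only [fv_encStr, Env.restrict_empty]
      exact Nat.le_of_ble_eq_true rfl
    exact NSteps.refl _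

theorem scrollState_run (s : List Bool) {e : Env} (he : e = eE 0 ∨ e = eE0Swap) :
    NSteps (SKCountLe 9) (18 * s.length + 12) (scrollState e s) ⟨tmI, .nil, []⟩ := by
  induction s generalizing e with
  | nil => exact (scrollState_segments he).1
  | cons b r ih =>
    rw [List.length_cons, show 18 * (r.length + 1) + 12 = 18 + (18 * r.length + 12) by ring]
    exact ((scrollState_segments he).2 b r).trans (ih (.inr rfl))

def addrSizeBound (t0 : Term) : ℕ := Nat.size t0.inorder.length

theorem addrSize_le_addrSizeBound (t0 u : Term) : addrSize t0 u ≤ addrSizeBound t0 :=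
  Nat.size_le_size List.idxOf_le_length

mutual
/-- Each closure contributes at most two addresses: its code and the variable it is bound to. -/
theorem Clo.size_add_addrSizeBound_le (t0 : Term) :
    ∀ c : Clo, c.size t0 + addrSizeBound t0 ≤ 2 * addrSizeBound t0 * c.count
  | .mk u e => by
    have := addrSize_le_addrSizeBound t0 u
    have := Env.sizeE_le t0 e
    simp only [Clo.size, Clo.count]
    linarith
theorem Env.sizeE_le (t0 : Term) : ∀ e : Env, e.sizeE t0 ≤ 2 * addrSizeBound t0 * e.count
  | .nil => by simp [Env.sizeE, Env.count]
  | .cons x c e => by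
    have := addrSize_le_addrSizeBound t0 (.var x)
    have := Clo.size_add_addrSizeBound_le t0 c
    have := Env.sizeE_le t0 e
    simp only [Env.sizeE, Env.count]
    linarith
end

theorem stackSize_le (t0 : Term) (S : List Clo) :
    stackSize t0 S ≤ 2 * addrSizeBound t0 * (S.map Clo.count).sum := by
  induction S with
  | nil => simp [stackSize]
  | cons c S ih =>
    have := Clo.size_add_addrSizeBound_le t0 c
    simp only [stackSize, List.map_cons, List.sum_cons] at ih ⊢
    linarith

theorem State.size_le (t0 : Term) (st : State) :
    st.size t0 ≤ 2 * addrSizeBound t0 * st.count := by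
  have := addrSize_le_addrSizeBound t0 st.tm
  have := Env.sizeE_le t0 st.env
  have := stackSize_le t0 st.stk
  simp only [State.size, State.count]
  linarith

theorem length_inorder_encStr (s : List Bool) : (encStr s).inorder.length = 5 * s.length + 4 := by
  induction s with
  | nil => rfl
  | cons b r ih => simp [encStr, Term.inorder, ih]; omega

theorem addrSizeBound_toy_le (s : List Bool) :
    addrSizeBound (.app tmToy (encStr s)) ≤ 6 * (Nat.log 2 s.length + 1) := by
  have hlen : (Term.app tmToy (encStr s)).inorder.length = 5 * s.length + 35 := by
    simp only [Term.inorder, List.length_append, List.length_cons, length_inorder_encStr]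
    rw [show tmToy.inorder.length = 30 from rfl]
    omega
  rw [addrSizeBound, hlen, Nat.size_le, pow_mul']
  have hs : s.length < 2 ^ (Nat.log 2 s.length + 1) := Nat.lt_pow_succ_log_self one_lt_two _
  have ha : 2 ≤ 2 ^ (Nat.log 2 s.length + 1) := le_self_pow₀ one_le_two (Nat.succ_ne_zero _)
  generalize 2 ^ (Nat.log 2 s.length + 1) = a at hs ha ⊢
  calc 5 * s.length + 35 < 2 ^ 5 * a := by omega
    _ ≤ a ^ 5 * a := by gcongr
    _ = a ^ 6 := by ring

/-- Space KAM scrolling invariant: `(y(x x y), e0, (⟨s⟩, ε)·ε)`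
runs to `(I, ε, ε)` in `Θ(|s|)` steps, with a constant bound on closure counts
and `O(log |s|)` space relative to the code `toy ⟨s⟩`. -/
theorem space_kam_scrolling_invariant :
    ∃ k1 k2 C k : ℕ, 0 < k1 ∧ 0 < k2 ∧ 0 < k ∧ ∀ s : List Bool,
      (∃ m : ℕ, k1 * s.length ≤ m ∧ m ≤ k2 * (s.length + 1) ∧
        NSteps SK m ⟨.app (.var 1) xxy, eE 0, [.mk (encStr s) .nil]⟩ ⟨tmI, .nil, []⟩) ∧
      (∀ st : State,
        Relation.ReflTransGen SK ⟨.app (.var 1) xxy, eE 0, [.mk (encStr s) .nil]⟩ st →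
        st.count ≤ C ∧ st.size (.app tmToy (encStr s)) ≤ k * (Nat.log 2 s.length + 1)) := by
  refine ⟨18, 30, 9, 108, by norm_num, by norm_num, by norm_num, fun s => ?_⟩
  have hrun := scrollState_run s (.inl rfl)
  refine ⟨⟨_, by omega, by omega, hrun.mono fun _ _ h => h.1⟩, fun st hst => ?_⟩
  have hcount : st.count ≤ 9 :=
    hrun.of_reflTransGen_of_deterministic (R := SK) (P := fun st => st.count ≤ 9)
      SK.deterministic SK.not_tmI_nil_nil (Nat.le_of_ble_eq_true rfl) hst
  refine ⟨hcount, ?_⟩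
  calc st.size (.app tmToy (encStr s))
      ≤ 2 * addrSizeBound (.app tmToy (encStr s)) * st.count := State.size_le _ _
    _ ≤ 2 * (6 * (Nat.log 2 s.length + 1)) * 9 := by gcongr; exact addrSizeBound_toy_le s
    _ = 108 * (Nat.log 2 s.length + 1) := by ring
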